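/- Let K be a type of keys with decidable equality and V a type of values, let S₁ and S₂ be schedules of the same length m, and let π be a bijection on positions {0,…,m−1} such that the operation of S₂ at position π(i) equals the operation of S₁ at position i. Suppose (Read-Complete) for every position i of S₁ holding a read of key k, either both S₁ (before i) and S₂ (before π(i)) contain no write to k, or the last write to k before i in S₁ is at a position j whose image π(j) is the last write to k before π(i) in S₂; and suppose (Write-Complete) for every key k, either neither schedule writes k, or the last write to k in S₁ is at a position j with π(j) the last write to k in S₂. Then for every initial store s₀, every read of S₁ at position i returns the same value as the corresponding read of S₂ at position π(i), and the final stores after executing S₁ and S₂ from s₀ are equal. -/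
import Mathlib


/-- An operation over keys `K` and values `V`: `write k v` or `read k`. -/
inductive Op (K : Type*) (V : Type*) where
  | write (k : K) (v : V)
  | read (k : K)

variable {K V : Type*} [DecidableEq K]

/-- One execution step: a write updates the store, a read leaves it unchanged. -/
def step (s : K → V) : Op K V → K → V
  | Op.write k v => Function.update s k v
  | Op.read _ => s

/-- The store obtained by executing a schedule left to right from `s₀`. -/
def execStore (s₀ : K → V) (S : List (Op K V)) : K → V := S.foldl step s₀

/-- Position `j` holds the last write to key `k` strictly before position `i`
in the schedule `S` (of length `m`). -/
def IsLastWriteBefore {m : ℕ} (S : Fin m → Op K V) (k : K) (i j : Fin m) : Prop :=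
  j < i ∧ (∃ v, S j = Op.write k v) ∧
    ∀ l : Fin m, j < l → l < i → ∀ v, S l ≠ Op.write k v

/-- Position `j` holds the last write to key `k` in the schedule `S`. -/
def IsLastWrite {m : ℕ} (S : Fin m → Op K V) (k : K) (j : Fin m) : Prop :=
  (∃ v, S j = Op.write k v) ∧ ∀ l : Fin m, j < l → ∀ v, S l ≠ Op.write k v

lemma take_succ_ofFn {m : ℕ} (S : Fin m → Op K V) (n : ℕ) (hn : n < m) :
    (List.ofFn S).take (n + 1) = (List.ofFn S).take n ++ [S ⟨n, hn⟩] := by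
  rw [List.take_succ]
  congr 1
  have h : n < (List.ofFn S).length := by simpa using hn
  rw [List.getElem?_eq_getElem h]
  simp [List.getElem_ofFn]

lemma exec_append_single (s₀ : K → V) (l : List (Op K V)) (a : Op K V) :
    execStore s₀ (l ++ [a]) = step (execStore s₀ l) a := by
  simp [execStore, List.foldl_append]

lemma step_ne_write (s : K → V) (k : K) (a : Op K V)
    (h : ∀ v, a ≠ Op.write k v) : step s a k = s k := by
  cases a with
  | write k' v =>
      have : k' ≠ k := by
        intro hk; exact h v (by rw [hk])
      simp [step, Function.update_of_ne (Ne.symm this)]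
  | read _ => simp [step]

lemma exec_no_write {m : ℕ} (S : Fin m → Op K V) (s₀ : K → V) (k : K) :
    ∀ n : ℕ, n ≤ m → (∀ j : Fin m, (j : ℕ) < n → ∀ v, S j ≠ Op.write k v) →
      execStore s₀ ((List.ofFn S).take n) k = s₀ k := by
  intro n
  induction n with
  | zero => intro _ _; simp [execStore]
  | succ n ih =>
      intro hn h
      have hnm : n < m := hn
      rw [take_succ_ofFn S n hnm, exec_append_single,
        step_ne_write _ _ _ (h ⟨n, hnm⟩ (Nat.lt_succ_self n))]
      exact ih (le_of_lt hn) (fun j hj v => h j (Nat.lt_succ_of_lt hj) v)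

lemma exec_last_write {m : ℕ} (S : Fin m → Op K V) (s₀ : K → V) (k : K) (v : V) :
    ∀ n : ℕ, n ≤ m → ∀ j : Fin m, (j : ℕ) < n → S j = Op.write k v →
      (∀ l : Fin m, j < l → (l : ℕ) < n → ∀ w, S l ≠ Op.write k w) →
      execStore s₀ ((List.ofFn S).take n) k = v := by
  intro n
  induction n with
  | zero => intro _ j hj; omega
  | succ n ih =>
      intro hn j hj hw hno
      have hnm : n < m := hn
      rw [take_succ_ofFn S n hnm, exec_append_single]
      by_cases hjn : (j : ℕ) = n
      · have : (⟨n, hnm⟩ : Fin m) = j := by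
          apply Fin.ext; simp [hjn]
        rw [this, hw]
        simp [step]
      · have hjn' : (j : ℕ) < n := by omega
        rw [step_ne_write _ _ _ (hno ⟨n, hnm⟩ (by simp [Fin.lt_def]; omega)
          (Nat.lt_succ_self n))]
        exact ih (le_of_lt hn) j hjn' hw
          (fun l hl hln w => hno l hl (Nat.lt_succ_of_lt hln) w)

/-- Theorem 8.4: if two schedules of the same length, related by a bijection
`π` on positions preserving operations, are Read-Complete (every read reads
from the corresponding last write, or from no write, in both schedules) and
Write-Complete (for each key, the last writes correspond under `π`), then from
any initial store every read returns the same value in both schedules and the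
final stores coincide. -/
theorem serializable_of_readComplete_writeComplete {m : ℕ}
    (S₁ S₂ : Fin m → Op K V) (π : Equiv.Perm (Fin m))
    (hπ : ∀ i : Fin m, S₂ (π i) = S₁ i)
    (hRC : ∀ (i : Fin m) (k : K), S₁ i = Op.read k →
      ((∀ j : Fin m, j < i → ∀ v, S₁ j ≠ Op.write k v) ∧
       (∀ j : Fin m, j < π i → ∀ v, S₂ j ≠ Op.write k v)) ∨
      (∃ j : Fin m, IsLastWriteBefore S₁ k i j ∧ IsLastWriteBefore S₂ k (π i) (π j)))
    (hWC : ∀ k : K,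
      ((∀ j : Fin m, ∀ v, S₁ j ≠ Op.write k v) ∧
       (∀ j : Fin m, ∀ v, S₂ j ≠ Op.write k v)) ∨
      (∃ j : Fin m, IsLastWrite S₁ k j ∧ IsLastWrite S₂ k (π j))) :
    ∀ s₀ : K → V,
      (∀ (i : Fin m) (k : K), S₁ i = Op.read k →
        execStore s₀ ((List.ofFn S₁).take (i : ℕ)) k =
          execStore s₀ ((List.ofFn S₂).take ((π i : Fin m) : ℕ)) k) ∧
      execStore s₀ (List.ofFn S₁) = execStore s₀ (List.ofFn S₂) := by
  intro s₀
  constructor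
  · intro i k hik
    rcases hRC i k hik with ⟨h1, h2⟩ | ⟨j, ⟨hj1, ⟨v, hv⟩, hno1⟩, ⟨hj2, ⟨v', hv'⟩, hno2⟩⟩
    · rw [exec_no_write S₁ s₀ k i i.2.le (fun j hj => h1 j (Fin.lt_def.mpr hj)),
        exec_no_write S₂ s₀ k (π i) (π i).2.le (fun j hj => h2 j (Fin.lt_def.mpr hj))]
    · have hvv : v' = v := by
        rw [hπ j, hv] at hv'
        cases hv'; rfl
      rw [exec_last_write S₁ s₀ k v i i.2.le j hj1 hv
          (fun l hl hln w => hno1 l hl (Fin.lt_def.mpr hln) w),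
        exec_last_write S₂ s₀ k v (π i) (π i).2.le (π j) hj2 (hvv ▸ hv')
          (fun l hl hln w => hno2 l hl (Fin.lt_def.mpr hln) w)]
  · funext k
    have hfull : ∀ (S : Fin m → Op K V), List.ofFn S = (List.ofFn S).take m := by
      intro S; rw [List.take_of_length_le (by simp)]
    rcases hWC k with ⟨h1, h2⟩ | ⟨j, ⟨⟨v, hv⟩, hno1⟩, ⟨v', hv'⟩, hno2⟩
    · rw [hfull S₁, hfull S₂,
        exec_no_write S₁ s₀ k m le_rfl (fun j _ => h1 j),
        exec_no_write S₂ s₀ k m le_rfl (fun j _ => h2 j)]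
    · have hvv : v' = v := by
        rw [hπ j, hv] at hv'
        cases hv'; rfl
      rw [hfull S₁, hfull S₂,
        exec_last_write S₁ s₀ k v m le_rfl j j.2 hv (fun l hl _ w => hno1 l hl w),
        exec_last_write S₂ s₀ k v m le_rfl (π j) (π j).2 (hvv ▸ hv')
          (fun l hl _ w => hno2 l hl w)]
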